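/- For all imaginary octonions p, q with ⟨p,q⟩ = 0 and all z ∈ ℝ, a ∈ 𝕆: ½·[ad_{X_p}, ad_{X_q}](P(z,a)) = P(0, 2(⟨p,a⟩q − ⟨q,a⟩p)). In particular the nested operator D_{p,q} := ½[ad_{X_p}, ad_{X_q}] annihilates P(z,a) whenever ⟨a,p⟩ = ⟨a,q⟩ = 0, and is an infinitesimal rotation in the (p,q)-plane. -/

import Mathlib

noncomputable section

abbrev H := Quaternion ℝ

/-- The octonions 𝕆, as the Cayley–Dickson double of the quaternions:
pairs (a,b) of quaternions. -/
def Oct : Type := H × H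

namespace Oct

instance : AddCommGroup Oct := inferInstanceAs (AddCommGroup (H × H))
instance : Module ℝ Oct := inferInstanceAs (Module ℝ (H × H))

def mk' (a b : H) : Oct := (a, b)
def fst : Oct → H := Prod.fst
def snd : Oct → H := Prod.snd

/-- Cayley–Dickson multiplication: (a,b)·(c,d) = (ac − conj(d)b, da + b·conj(c)). -/
instance : Mul Oct :=
  ⟨fun p q => mk' (p.fst * q.fst - star q.snd * p.snd) (q.snd * p.fst + p.snd * star q.fst)⟩

instance : One Oct := ⟨mk' 1 0⟩

/-- Octonionic conjugation: conj (a,b) = (conj a, −b). -/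
def conj (p : Oct) : Oct := mk' (star p.fst) (-p.snd)

/-- The real part of an octonion, as a real scalar. -/
def re (p : Oct) : ℝ := (p.fst).re

/-- The bilinear form ⟨x,y⟩ = (x·conj(y) + y·conj(x))/2, a real scalar. -/
def oinner (p q : Oct) : ℝ := re (p * conj q + q * conj p) / 2

/-- The norm N(x) = x·conj(x), a real scalar. -/
def N (p : Oct) : ℝ := re (p * conj p)

/-- An octonion is imaginary if conj x = −x. -/
def IsIm (p : Oct) : Prop := conj p = -p

/-- The embedding of the reals into the octonions. -/
def oR (r : ℝ) : Oct := mk' (algebraMap ℝ H r) 0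

end Oct

open Oct

abbrev M2 := Matrix (Fin 2) (Fin 2) Oct

/-- The traceless Hermitian 2×2 matrix P(z,a) = !![z, a; conj a, −z]. -/
def Pm (z : ℝ) (a : Oct) : M2 := !![oR z, a; conj a, -oR z]

/-- The off-diagonal anti-Hermitian generator X_q = !![0, q; −conj q, 0]. -/
def Xm (q : Oct) : M2 := !![0, q; -conj q, 0]

/-- The diagonal generator D_q = !![q, 0; 0, −q]. -/
def Dm (q : Oct) : M2 := !![q, 0; 0, -q]

/-- The adjoint action ad_A : P ↦ AP − PA (entrywise octonion multiplication). -/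
def ad (A : M2) : M2 → M2 := fun P => A * P - P * A

/-- The bracket of operators, [S,T] = S∘T − T∘S. -/
def br (S T : M2 → M2) : M2 → M2 := fun P => S (T P) - T (S P)

/-
Everything follows from one computation: `ad_{X_q}` maps `P(z,a)` to `P(2⟨q,a⟩, -2z q)`. Its
diagonal entries are `q ā + a q̄` and `-(q̄ a + ā q)`, and both sums are real, hence `2⟨q,a⟩`:
their first quaternion component has the form `u + ū`, their second vanishes. Applying this twice, the
diagonal entries `-4z⟨p,q⟩` of `ad_{X_p} ad_{X_q}` and `ad_{X_q} ad_{X_p}` cancel by symmetry of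
the form, leaving `P(0, 4(⟨p,a⟩q - ⟨q,a⟩p))`.
-/

lemma Matrix.sub_fin_two {α : Type*} [Sub α] (a b c d e f g h : α) :
    !![a, b; c, d] - !![e, f; g, h] = !![a - e, b - f; c - g, d - h] := by
  ext i j; fin_cases i <;> fin_cases j <;> rfl

lemma Matrix.smul_fin_two {R α : Type*} [SMul R α] (r : R) (a b c d : α) :
    r • !![a, b; c, d] = !![r • a, r • b; r • c, r • d] := by
  ext i j; fin_cases i <;> fin_cases j <;> rfl

namespace Oct

@[ext]
lemma ext {x y : Oct} (h₁ : x.fst = y.fst) (h₂ : x.snd = y.snd) : x = y := Prod.ext h₁ h₂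

@[simp] lemma mul_fst (x y : Oct) : (x * y).fst = x.fst * y.fst - star y.snd * x.snd := rfl
@[simp] lemma mul_snd (x y : Oct) : (x * y).snd = y.snd * x.fst + x.snd * star y.fst := rfl
@[simp] lemma add_fst (x y : Oct) : (x + y).fst = x.fst + y.fst := rfl
@[simp] lemma add_snd (x y : Oct) : (x + y).snd = x.snd + y.snd := rfl
@[simp] lemma sub_fst (x y : Oct) : (x - y).fst = x.fst - y.fst := rfl
@[simp] lemma sub_snd (x y : Oct) : (x - y).snd = x.snd - y.snd := rfl
@[simp] lemma neg_fst (x : Oct) : (-x).fst = -x.fst := rfl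
@[simp] lemma neg_snd (x : Oct) : (-x).snd = -x.snd := rfl
@[simp] lemma smul_fst (r : ℝ) (x : Oct) : (r • x).fst = r • x.fst := rfl
@[simp] lemma smul_snd (r : ℝ) (x : Oct) : (r • x).snd = r • x.snd := rfl
@[simp] lemma zero_fst : (0 : Oct).fst = 0 := rfl
@[simp] lemma zero_snd : (0 : Oct).snd = 0 := rfl
@[simp] lemma conj_fst (x : Oct) : (conj x).fst = star x.fst := rfl
@[simp] lemma conj_snd (x : Oct) : (conj x).snd = -x.snd := rfl
@[simp] lemma oR_fst (r : ℝ) : (oR r).fst = r := rfl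
@[simp] lemma oR_snd (r : ℝ) : (oR r).snd = 0 := rfl

protected lemma zero_mul (x : Oct) : 0 * x = 0 := by ext : 1 <;> simp
protected lemma mul_zero (x : Oct) : x * 0 = 0 := by ext : 1 <;> simp

protected lemma neg_mul (x y : Oct) : -x * y = -(x * y) := by
  ext : 1 <;> simp only [mul_fst, mul_snd, neg_fst, neg_snd] <;> noncomm_ring

protected lemma mul_neg (x y : Oct) : x * -y = -(x * y) := by
  ext : 1 <;> simp only [mul_fst, mul_snd, neg_fst, neg_snd, star_neg] <;> noncomm_ring

lemma oR_mul (r : ℝ) (x : Oct) : oR r * x = r • x := by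
  ext : 1 <;> simp [Quaternion.coe_mul_eq_smul, Quaternion.mul_coe_eq_smul]

lemma mul_oR (x : Oct) (r : ℝ) : x * oR r = r • x := by
  ext : 1 <;> simp [Quaternion.mul_coe_eq_smul]

lemma oR_sub (r s : ℝ) : oR (r - s) = oR r - oR s := by ext : 1 <;> simp

lemma smul_oR (r s : ℝ) : r • oR s = oR (r * s) := by
  ext : 1 <;> simp [Quaternion.smul_coe]

lemma conj_sub (x y : Oct) : conj (x - y) = conj x - conj y := by
  ext : 1 <;> simp [neg_add_eq_sub]

lemma conj_smul (r : ℝ) (x : Oct) : conj (r • x) = r • conj x := by ext : 1 <;> simp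

lemma oinner_comm (x y : Oct) : oinner x y = oinner y x := by
  unfold oinner; rw [add_comm]

lemma oinner_smul_right (x y : Oct) (r : ℝ) : oinner x (r • y) = r * oinner x y := by
  simp only [oinner, re, add_fst, mul_fst, conj_fst, conj_snd, smul_fst, smul_snd,
    Quaternion.re_add, Quaternion.re_sub, Quaternion.re_mul, Quaternion.re_star,
    Quaternion.imI_star, Quaternion.imJ_star, Quaternion.imK_star, Quaternion.re_neg,
    Quaternion.imI_neg, Quaternion.imJ_neg, Quaternion.imK_neg, Quaternion.re_smul,
    Quaternion.imI_smul, Quaternion.imJ_smul, Quaternion.imK_smul, smul_eq_mul]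
  ring

lemma oinner_self (x : Oct) : oinner x x = N x := by
  simp only [oinner, N, re, add_fst, Quaternion.re_add]
  ring

lemma eq_oR_re {w : Oct} (h₁ : star w.fst = w.fst) (h₂ : w.snd = 0) : w = oR (re w) :=
  ext (Quaternion.star_eq_self.1 h₁) h₂

lemma mul_conj_add_mul_conj (x y : Oct) : x * conj y + y * conj x = oR (2 * oinner x y) := by
  rw [oinner, mul_div_cancel₀ _ two_ne_zero]
  apply eq_oR_re
  · simp only [add_fst, mul_fst, conj_fst, conj_snd, star_add, star_sub, star_mul, star_star,
      star_neg]
    noncomm_ring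
  · simp only [add_snd, mul_snd, conj_fst, conj_snd, star_star, neg_mul]
    abel

lemma conj_mul_add_conj_mul (x y : Oct) : conj x * y + conj y * x = oR (2 * oinner x y) := by
  have hre : re (conj x * y + conj y * x) = 2 * oinner x y := by
    simp only [oinner, re, add_fst, mul_fst, conj_fst, conj_snd, Quaternion.re_add,
      Quaternion.re_sub, Quaternion.re_mul, Quaternion.re_star, Quaternion.imI_star,
      Quaternion.imJ_star, Quaternion.imK_star, Quaternion.re_neg, Quaternion.imI_neg,
      Quaternion.imJ_neg, Quaternion.imK_neg]
    ring
  rw [← hre]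
  apply eq_oR_re
  · simp only [add_fst, mul_fst, conj_fst, conj_snd, star_add, star_sub, star_mul, star_star,
      star_neg]
    noncomm_ring
  · simp only [add_snd, mul_snd, conj_fst, conj_snd, neg_mul]
    abel

end Oct

lemma ad_Xm_Pm (q : Oct) (z : ℝ) (a : Oct) :
    ad (Xm q) (Pm z a) = Pm (2 * oinner q a) (-(2 * z) • q) := by
  rw [ad, Xm, Pm, Matrix.mul_fin_two, Matrix.mul_fin_two, Matrix.sub_fin_two, Pm]
  simp only [Oct.zero_mul, Oct.mul_zero, Oct.neg_mul, Oct.mul_neg, oR_mul, mul_oR, smul_zero,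
    smul_neg, neg_zero, zero_add, add_zero, sub_neg_eq_add]
  congr 1
  simp only [Matrix.vecCons_inj, and_true]
  refine ⟨⟨mul_conj_add_mul_conj q a, by module⟩, by rw [conj_smul]; module, ?_⟩
  rw [← conj_mul_add_conj_mul]
  abel

lemma Pm_sub (z z' : ℝ) (a a' : Oct) : Pm z a - Pm z' a' = Pm (z - z') (a - a') := by
  rw [Pm, Pm, Pm, Matrix.sub_fin_two, oR_sub, conj_sub, neg_sub_neg, neg_sub]

lemma smul_Pm (r z : ℝ) (a : Oct) : r • Pm z a = Pm (r * z) (r • a) := by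
  rw [Pm, Pm, Matrix.smul_fin_two, smul_oR, conj_smul, smul_neg, smul_oR]

lemma Pm_zero : Pm 0 0 = 0 := by
  simpa using (smul_Pm 0 0 0).symm

lemma br_ad_Xm_Pm (p q : Oct) (z : ℝ) (a : Oct) :
    br (ad (Xm p)) (ad (Xm q)) (Pm z a) = Pm 0 ((4 * oinner p a) • q - (4 * oinner q a) • p) := by
  rw [br, ad_Xm_Pm q, ad_Xm_Pm p, ad_Xm_Pm p, ad_Xm_Pm q, Pm_sub, oinner_smul_right,
    oinner_smul_right, oinner_comm p q]
  congr 1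
  · ring
  · module

theorem Dpq_action_general (p q : Oct) (hpq : oinner p q = 0) :
    (∀ (z : ℝ) (a : Oct),
      (1/2 : ℝ) • br (ad (Xm p)) (ad (Xm q)) (Pm z a)
        = Pm 0 ((2 * oinner p a) • q - (2 * oinner q a) • p)) ∧
    (∀ (z : ℝ) (a : Oct), oinner a p = 0 → oinner a q = 0 →
      (1/2 : ℝ) • br (ad (Xm p)) (ad (Xm q)) (Pm z a) = 0) ∧
    (N p = 1 → N q = 1 →
      (1/2 : ℝ) • br (ad (Xm p)) (ad (Xm q)) (Pm 0 p) = Pm 0 ((2 : ℝ) • q) ∧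
      (1/2 : ℝ) • br (ad (Xm p)) (ad (Xm q)) (Pm 0 q) = Pm 0 ((-2 : ℝ) • p)) := by
  have action (z : ℝ) (a : Oct) : (1/2 : ℝ) • br (ad (Xm p)) (ad (Xm q)) (Pm z a)
      = Pm 0 ((2 * oinner p a) • q - (2 * oinner q a) • p) := by
    rw [br_ad_Xm_Pm, smul_Pm]
    congr 1
    · ring
    · module
  refine ⟨action, fun z a hap haq => ?_, fun hNp hNq => ⟨?_, ?_⟩⟩
  · rw [action, oinner_comm p a, hap, oinner_comm q a, haq]
    simp [Pm_zero]
  · rw [action, oinner_self, hNp, oinner_comm q p, hpq]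
    norm_num
  · rw [action, oinner_self, hNq, hpq]
    norm_num

/-- For all imaginary octonions p, q with ⟨p,q⟩ = 0 and all z ∈ ℝ, a ∈ 𝕆:
½·[ad_{X_p}, ad_{X_q}](P(z,a)) = P(0, 2(⟨p,a⟩q − ⟨q,a⟩p)).  In particular the
nested operator D_{p,q} := ½[ad_{X_p}, ad_{X_q}] annihilates P(z,a) whenever
⟨a,p⟩ = ⟨a,q⟩ = 0, and is an infinitesimal rotation in the (p,q)-plane. -/
theorem Dpq_action (p q : Oct) (hp : IsIm p) (hq : IsIm q) (hpq : oinner p q = 0) :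
    (∀ (z : ℝ) (a : Oct),
      (1/2 : ℝ) • br (ad (Xm p)) (ad (Xm q)) (Pm z a)
        = Pm 0 ((2 * oinner p a) • q - (2 * oinner q a) • p)) ∧
    (∀ (z : ℝ) (a : Oct), oinner a p = 0 → oinner a q = 0 →
      (1/2 : ℝ) • br (ad (Xm p)) (ad (Xm q)) (Pm z a) = 0) ∧
    (N p = 1 → N q = 1 →
      (1/2 : ℝ) • br (ad (Xm p)) (ad (Xm q)) (Pm 0 p) = Pm 0 ((2 : ℝ) • q) ∧
      (1/2 : ℝ) • br (ad (Xm p)) (ad (Xm q)) (Pm 0 q) = Pm 0 ((-2 : ℝ) • p)) :=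
  Dpq_action_general p q hpq
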